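/- arXiv:1212.0873 — 7 statements merged into one kernel-verified Lean document; each statement's English description precedes it below -/
import Mathlib

section
/- If Ŝ is a doubly uniform sampling of {1,...,n} (n > 1), then for any i ≠ j, P({i,j} ⊆ Ŝ) = E[|Ŝ|² − |Ŝ|] / (n(n−1)). -/
open Finset

private lemma pair_sum_symm (n : ℕ) (P : Finset (Fin n) → ℝ)
    (hDU : ∀ S S' : Finset (Fin n), S.card = S'.card → P S = P S')
    (i j i' j' : Fin n) (hij : i ≠ j) (hij' : i' ≠ j') :
    (∑ S : Finset (Fin n), if i ∈ S ∧ j ∈ S then P S else 0)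
      = (∑ S : Finset (Fin n), if i' ∈ S ∧ j' ∈ S then P S else 0) := by
  set σ : Equiv.Perm (Fin n) := Equiv.swap i i' with hσ
  set τ : Equiv.Perm (Fin n) := σ.trans (Equiv.swap (σ j) j') with hτ
  have hτi : τ i = i' := by
    have h1 : σ j ≠ i' := by
      have : σ j ≠ σ i := fun h => hij.symm (σ.injective h)
      simpa [σ, Equiv.swap_apply_left] using this
    simp [τ, σ, Equiv.swap_apply_left, Equiv.swap_apply_of_ne_of_ne h1.symm hij']
  have hτj : τ j = j' := by simp [τ, Equiv.swap_apply_left]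
  refine Fintype.sum_equiv τ.finsetCongr _ _ ?_
  intro S
  have hmem : ∀ a : Fin n, τ a ∈ τ.finsetCongr S ↔ a ∈ S := by
    intro a
    simp [Equiv.finsetCongr, Finset.mem_map_equiv]
  have hcard : P S = P (τ.finsetCongr S) := by
    apply hDU
    simp [Equiv.finsetCongr]
  have h1 := hmem i; rw [hτi] at h1
  have h2 := hmem j; rw [hτj] at h2
  simp only [h1, h2, ← hcard]

/-- If `Ŝ` is a doubly uniform sampling of `{1,...,n}` with `n > 1`, then for `i ≠ j`,
`P({i,j} ⊆ Ŝ) = E[|Ŝ|² − |Ŝ|] / (n(n−1))`. -/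
theorem doubly_uniform_pairwise_prob
    (n : ℕ) (hn : 1 < n) (P : Finset (Fin n) → ℝ)
    (hP : ∀ S, 0 ≤ P S) (hsum : ∑ S : Finset (Fin n), P S = 1)
    (hDU : ∀ S S' : Finset (Fin n), S.card = S'.card → P S = P S')
    (i j : Fin n) (hij : i ≠ j) :
    (∑ S : Finset (Fin n), if i ∈ S ∧ j ∈ S then P S else 0)
      = (∑ S : Finset (Fin n), P S * ((S.card : ℝ) ^ 2 - (S.card : ℝ)))
          / ((n : ℝ) * ((n : ℝ) - 1)) := by
  have hnn : (0:ℝ) < (n : ℝ) * ((n : ℝ) - 1) := by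
    have h1 : (1:ℝ) < (n:ℝ) := by exact_mod_cast hn
    nlinarith
  rw [eq_div_iff (ne_of_gt hnn)]
  -- double counting over off-diagonal pairs
  have key : ∑ p ∈ (univ : Finset (Fin n)).offDiag,
      (∑ S : Finset (Fin n), if p.1 ∈ S ∧ p.2 ∈ S then P S else 0)
      = ∑ S : Finset (Fin n), P S * ((S.card : ℝ) ^ 2 - (S.card : ℝ)) := by
    rw [Finset.sum_comm]
    refine Finset.sum_congr rfl ?_
    intro S _
    have hsub : S.offDiag ⊆ (univ : Finset (Fin n)).offDiag := by
      intro p hp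
      simp only [Finset.mem_offDiag] at hp ⊢
      exact ⟨Finset.mem_univ _, Finset.mem_univ _, hp.2.2⟩
    have : ∑ p ∈ (univ : Finset (Fin n)).offDiag,
        (if p.1 ∈ S ∧ p.2 ∈ S then P S else 0)
        = ∑ p ∈ S.offDiag, P S := by
      rw [← Finset.sum_subset hsub]
      · refine Finset.sum_congr rfl ?_
        intro p hp
        simp only [Finset.mem_offDiag] at hp
        simp [hp.1, hp.2.1]
      · intro p hp hps
        simp only [Finset.mem_offDiag] at hp hps
        have : ¬ (p.1 ∈ S ∧ p.2 ∈ S) := by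
          intro h
          exact hps ⟨h.1, h.2, hp.2.2⟩
        simp [this]
    rw [this, Finset.sum_const, Finset.offDiag_card, nsmul_eq_mul]
    have hle : S.card ≤ S.card * S.card := by
      rcases Nat.eq_zero_or_pos S.card with h | h
      · simp [h]
      · exact Nat.le_mul_of_pos_left _ h
    rw [Nat.cast_sub hle]
    push_cast
    ring
  have hconst : ∀ p ∈ (univ : Finset (Fin n)).offDiag,
      (∑ S : Finset (Fin n), if p.1 ∈ S ∧ p.2 ∈ S then P S else 0)
      = (∑ S : Finset (Fin n), if i ∈ S ∧ j ∈ S then P S else 0) := by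
    intro p hp
    simp only [Finset.mem_offDiag] at hp
    exact pair_sum_symm n P hDU p.1 p.2 i j hp.2.2 hij
  rw [Finset.sum_congr rfl hconst, Finset.sum_const, Finset.offDiag_card,
    Finset.card_univ, Fintype.card_fin, nsmul_eq_mul] at key
  have hle : n ≤ n * n := Nat.le_mul_of_pos_left _ (by omega)
  rw [Nat.cast_sub hle] at key
  push_cast at key
  nlinarith [key]
end

section
/- There are precisely two nonvacuous samplings that are both doubly uniform and nonoverlapping uniform: the serial sampling (P(Ŝ = {i}) = 1/n for each i) and the fully parallel sampling (P(Ŝ = {1,...,n}) = 1). Equivalently: if Ŝ is doubly uniform, nonoverlapping uniform, and P(Ŝ = ∅) = 0, then either Ŝ generates only singletons or Ŝ = {1,...,n} with probability 1. -/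
open Finset

/-!
If the whole ground set is a part of the partition, it is the only part and carries mass 1.
Otherwise every part `S` with positive mass is a proper nonempty subset. Were `#S ≥ 2`, swapping
one element of `S` for a point outside `S` would give a set `T` of the same size meeting `S`;
double uniformity gives `T` the positive mass of `S`, so `T` would be a second part meeting `S`.
-/

namespace Finpartition

variable {α : Type*} [DecidableEq α] {s : Finset α} (P : Finpartition s)

theorem parts_eq_singleton_of_mem (hs : s ∈ P.parts) : P.parts = {s} := by
  refine eq_singleton_iff_unique_mem.mpr ⟨hs, fun t ht => ?_⟩
  obtain ⟨a, hat⟩ := P.nonempty_of_mem_parts ht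
  exact P.eq_of_mem_parts ht hs hat (P.subset ht hat)

theorem exists_card_eq_notMem_parts {S : Finset α} (hS : S ∈ P.parts) (hcard : 1 < #S)
    {b : α} (hbS : b ∉ S) : ∃ T, #T = #S ∧ T ∉ P.parts := by
  obtain ⟨a, ha, c, hc, hac⟩ := one_lt_card.mp hcard
  refine ⟨insert b (S.erase a), ?_, fun hT => ?_⟩
  · rw [card_insert_of_notMem (fun h => hbS (mem_of_mem_erase h)), card_erase_of_mem ha]
    omega
  · have hcT : c ∈ insert b (S.erase a) := mem_insert_of_mem (mem_erase.mpr ⟨Ne.symm hac, hc⟩)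
    have hST : S = insert b (S.erase a) := P.eq_of_mem_parts hS hT hc hcT
    exact hbS (hST ▸ mem_insert_self b _)

end Finpartition

theorem du_nu_classification_general
    (n : ℕ) (P : Finset (Fin n) → ℝ)
    (hDU : ∀ S S' : Finset (Fin n), S.card = S'.card → P S = P S')
    (hNU : ∃ Part : Finpartition (univ : Finset (Fin n)),
      ∀ S, P S = if S ∈ Part.parts then ((Part.parts.card : ℝ))⁻¹ else 0) :
    (∀ S, 0 < P S → S.card = 1) ∨ P univ = 1 := by
  obtain ⟨Part, hPart⟩ := hNU
  have mem_parts_of_pos : ∀ S, 0 < P S → S ∈ Part.parts := fun S hS => by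
    by_contra h
    rw [hPart S, if_neg h] at hS
    exact hS.ne rfl
  by_cases hu : univ ∈ Part.parts
  · right
    rw [hPart univ, if_pos hu, Part.parts_eq_singleton_of_mem hu]
    simp
  · left
    intro S hS
    have hSmem := mem_parts_of_pos S hS
    obtain ⟨b, hbS⟩ : ∃ b, b ∉ S := not_forall.mp fun h => hu (eq_univ_iff_forall.mpr h ▸ hSmem)
    by_contra hcard
    have hpos : 0 < #S := (Part.nonempty_of_mem_parts hSmem).card_pos
    obtain ⟨T, hTS, hT⟩ := Part.exists_card_eq_notMem_parts hSmem (by omega) hbS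
    exact hT (mem_parts_of_pos T (hDU S T hTS.symm ▸ hS))

/-- **Classification of nonvacuous DU ∩ NU samplings.** If a sampling `Ŝ` of `{1,...,n}` is
doubly uniform, nonoverlapping uniform (its pmf is uniform over the parts of a partition of
`{1,...,n}`), and nonvacuous (`P(Ŝ = ∅) = 0`), then either `Ŝ` generates only singletons
(serial sampling) or `Ŝ = {1,...,n}` with probability 1 (fully parallel sampling). -/
theorem du_nu_classification
    (n : ℕ) (P : Finset (Fin n) → ℝ)
    (hP : ∀ S, 0 ≤ P S) (hsum : ∑ S : Finset (Fin n), P S = 1)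
    (hDU : ∀ S S' : Finset (Fin n), S.card = S'.card → P S = P S')
    (hNU : ∃ Part : Finpartition (univ : Finset (Fin n)),
      ∀ S, P S = if S ∈ Part.parts then ((Part.parts.card : ℝ))⁻¹ else 0)
    (hnonvac : P ∅ = 0) :
    (∀ S, 0 < P S → S.card = 1) ∨ P univ = 1 :=
  du_nu_classification_general n P hDU hNU
end

section
/- Let Ŝ be a uniform sampling of {1,...,n}, w ∈ R^n, and g : R^N → R ∪ {+∞} be block separable, g(x) = Σ_{i=1}^n g_i(x^{(i)}). Then for all x, h, E[g(x + h_{[Ŝ]})] = (E[|Ŝ|]/n) g(x+h) + (1 − E[|Ŝ|]/n) g(x), where h_{[S]} denotes the vector whose blocks in S equal those of h and whose other blocks are zero. -/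
/-!
Taking expectations commutes with the block sum, so `E[g(x + h_{[Ŝ]})]` is the sum over
blocks `i` of `P(i ∈ Ŝ) gᵢ(x⁽ⁱ⁾ + h⁽ⁱ⁾) + P(i ∉ Ŝ) gᵢ(x⁽ⁱ⁾)`. For a uniform sampling these
probabilities are `α = E[|Ŝ|]/n` and `1 - α` for every block, and pulling the constants out of
the block sums gives the claim. Since `g` takes the value `+∞`, every distributivity step must be checked in `EReal`,
where it holds for nonnegative real factors.
-/

open Finset

namespace EReal

lemma coe_mul_add_of_nonneg {c : ℝ} (hc : 0 ≤ c) (a b : EReal) :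
    (c : EReal) * (a + b) = c * a + c * b :=
  left_distrib_of_nonneg_of_ne_top (EReal.coe_nonneg.2 hc) (coe_ne_top c) a b

variable {ι : Type*}

lemma coe_mul_sum_of_nonneg {c : ℝ} (hc : 0 ≤ c) (s : Finset ι) (f : ι → EReal) :
    (c : EReal) * ∑ i ∈ s, f i = ∑ i ∈ s, (c : EReal) * f i := by
  classical
  induction s using Finset.induction_on with
  | empty => simp
  | insert j s hj ih =>
    rw [sum_insert hj, sum_insert hj, coe_mul_add_of_nonneg hc, ih]

lemma coe_sum_mul_of_nonneg {s : Finset ι} {r : ι → ℝ} (hr : ∀ i ∈ s, 0 ≤ r i) (a : EReal) :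
    ((∑ i ∈ s, r i : ℝ) : EReal) * a = ∑ i ∈ s, (r i : EReal) * a := by
  classical
  induction s using Finset.induction_on with
  | empty => simp
  | insert j s hj ih =>
    have hs : ∀ i ∈ s, 0 ≤ r i := fun i hi => hr i (mem_insert_of_mem hi)
    rw [sum_insert hj, sum_insert hj, coe_add,
      right_distrib_of_nonneg (EReal.coe_nonneg.2 (hr j (mem_insert_self j s)))
        (EReal.coe_nonneg.2 (sum_nonneg hs)), ih hs]

variable {σ : Type*} [Fintype σ] [Fintype ι] [DecidableEq ι]

lemma sum_coe_mul_sum_eq_sum_inclusion_mul {P : σ → ℝ} (hP : ∀ s, 0 ≤ P s)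
    (T : σ → Finset ι) (A : ι → EReal) :
    ∑ s, (P s : EReal) * ∑ i ∈ T s, A i
      = ∑ i, ((∑ s, if i ∈ T s then P s else 0 : ℝ) : EReal) * A i := by
  calc ∑ s, (P s : EReal) * ∑ i ∈ T s, A i
      = ∑ s, ∑ i, ((if i ∈ T s then P s else 0 : ℝ) : EReal) * A i := by
        refine sum_congr rfl fun s _ => ?_
        have hite : ∀ i, ((if i ∈ T s then P s else 0 : ℝ) : EReal) * A i
            = if i ∈ T s then (P s : EReal) * A i else 0 := fun i => by split_ifs <;> simp
        simp_rw [hite, sum_ite_mem, univ_inter, coe_mul_sum_of_nonneg (hP s)]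
    _ = ∑ i, ∑ s, ((if i ∈ T s then P s else 0 : ℝ) : EReal) * A i := sum_comm
    _ = ∑ i, ((∑ s, if i ∈ T s then P s else 0 : ℝ) : EReal) * A i :=
        sum_congr rfl fun i _ =>
          (coe_sum_mul_of_nonneg (fun s _ => ite_nonneg (hP s) le_rfl) (A i)).symm

lemma sum_coe_mul_sum_of_inclusion_eq {P : σ → ℝ} (hP : ∀ s, 0 ≤ P s) (T : σ → Finset ι)
    {c : ℝ} (hc : ∀ i, (∑ s, if i ∈ T s then P s else 0) = c) (A : ι → EReal) :
    ∑ s, (P s : EReal) * ∑ i ∈ T s, A i = c * ∑ i, A i := by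
  rw [sum_coe_mul_sum_eq_sum_inclusion_mul hP]
  rcases isEmpty_or_nonempty ι with hι | ⟨⟨i₀⟩⟩
  · simp
  have hc0 : 0 ≤ c := hc i₀ ▸ sum_nonneg fun s _ => ite_nonneg (hP s) le_rfl
  simp_rw [hc, coe_mul_sum_of_nonneg hc0]

end EReal

lemma Finset.sum_apply_add_ite_mem {ι M : Type*} [Fintype ι] [DecidableEq ι] {E : ι → Type*}
    [∀ i, AddZeroClass (E i)] [AddCommMonoid M] (f : ∀ i, E i → M) (S : Finset ι)
    (x h : ∀ i, E i) :
    ∑ i, f i (x i + if i ∈ S then h i else 0)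
      = ∑ i ∈ S, f i (x i + h i) + ∑ i ∈ Sᶜ, f i (x i) := by
  rw [← sum_add_sum_compl S]
  congr 1 <;> refine sum_congr rfl fun i hi => ?_
  · rw [if_pos hi]
  · rw [if_neg (mem_compl.1 hi), add_zero]

theorem uniform_sampling_block_separable_general
    (n : ℕ) (E : Fin n → Type*) [∀ i, AddCommGroup (E i)]
    (P : Finset (Fin n) → ℝ)
    (hP : ∀ S, 0 ≤ P S) (hsum : ∑ S : Finset (Fin n), P S = 1)
    (α : ℝ)
    (hunif : ∀ i : Fin n, (∑ S : Finset (Fin n), if i ∈ S then P S else 0) = α)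
    (g : ∀ i, E i → EReal) (x h : ∀ i, E i) :
    ∑ S : Finset (Fin n),
        (P S : EReal) * ∑ i, g i (x i + (if i ∈ S then h i else 0))
      = (α : EReal) * (∑ i, g i (x i + h i))
          + (((1 - α : ℝ)) : EReal) * ∑ i, g i (x i) := by
  have hcompl : ∀ i : Fin n, (∑ S : Finset (Fin n), if i ∈ Sᶜ then P S else 0) = 1 - α :=
    fun i => by
      rw [← hsum, ← hunif i, ← sum_sub_distrib]
      refine sum_congr rfl fun S _ => ?_
      by_cases hi : i ∈ S <;> simp [hi]
  calc ∑ S : Finset (Fin n), (P S : EReal) * ∑ i, g i (x i + (if i ∈ S then h i else 0))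
      = ∑ S : Finset (Fin n), ((P S : EReal) * ∑ i ∈ S, g i (x i + h i)
          + (P S : EReal) * ∑ i ∈ Sᶜ, g i (x i)) :=
        sum_congr rfl fun S _ => by
          rw [sum_apply_add_ite_mem, EReal.coe_mul_add_of_nonneg (hP S)]
    _ = _ := by
      rw [sum_add_distrib, EReal.sum_coe_mul_sum_of_inclusion_eq hP (fun S => S) hunif,
        EReal.sum_coe_mul_sum_of_inclusion_eq hP compl hcompl]

/-- **Expectation of a block separable function under a uniform sampling.** Let `Ŝ` be a
uniform sampling of `{1,...,n}` (so `P(i ∈ Ŝ) = E[|Ŝ|]/n` for all `i`) and let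
`g(x) = ∑ᵢ gᵢ(x⁽ⁱ⁾)` be block separable with values in `ℝ ∪ {+∞}`. Then for all `x, h`:
`E[g(x + h_{[Ŝ]})] = (E[|Ŝ|]/n) g(x+h) + (1 − E[|Ŝ|]/n) g(x)`. -/
theorem uniform_sampling_block_separable
    (n : ℕ) (E : Fin n → Type*) [∀ i, AddCommGroup (E i)]
    (P : Finset (Fin n) → ℝ)
    (hP : ∀ S, 0 ≤ P S) (hsum : ∑ S : Finset (Fin n), P S = 1)
    (α : ℝ) (hα : α = (∑ S : Finset (Fin n), P S * (S.card : ℝ)) / n)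
    (hunif : ∀ i : Fin n, (∑ S : Finset (Fin n), if i ∈ S then P S else 0) = α)
    (g : ∀ i, E i → EReal) (x h : ∀ i, E i) :
    ∑ S : Finset (Fin n),
        (P S : EReal) * ∑ i, g i (x i + (if i ∈ S then h i else 0))
      = (α : EReal) * (∑ i, g i (x i + h i))
          + (((1 - α : ℝ)) : EReal) * ∑ i, g i (x i) :=
  uniform_sampling_block_separable_general n E P hP hsum α hunif g x h
end

section
/- Let f : R^N → R be convex, differentiable, and partially separable: f(x) = Σ_{J ∈ 𝒥} f_J(x) where each f_J is convex, differentiable, and depends only on blocks x^{(i)} for i ∈ J. Assume the block Lipschitz condition f(x + U_i t) ≤ f(x) + ⟨∇_i f(x), t⟩ + (L_i/2)‖t‖_{(i)}² for all x, i, t. Then for all x, h ∈ R^N, f(x+h) ≤ f(x) + ⟨∇f(x), h⟩ + (θ/2)‖h‖_L², where θ = max_{J∈𝒥} |J ∩ supp(h)| and supp(h) = {i : h^{(i)} ≠ 0}. -/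
open Finset
open scoped Classical

/-! Since `f_J` only sees the blocks in `J`, `f_J (x + h) = f_J (x + ∑_{i ∈ J ∩ supp h} Uᵢ h⁽ⁱ⁾)`,
and that point is the convex combination
`(1 - |J ∩ supp h|/θ) • x + ∑_{i ∈ J ∩ supp h} θ⁻¹ • (x + θ • Uᵢ h⁽ⁱ⁾)`.
Jensen for each `f_J`, summed over `J`, bounds `f(x + h) - f(x)` by
`θ⁻¹ ∑ᵢ (f(x + θ • Uᵢ h⁽ⁱ⁾) - f(x))`, and the block Lipschitz condition bounds each term by
`⟨∇ᵢf(x), h⁽ⁱ⁾⟩ + θ Lᵢ/2 ‖h⁽ⁱ⁾‖²`.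
When `θ = 0`, `f` is constant along `h`. -/

section Jensen

variable {ι E : Type*} [AddCommGroup E] [Module ℝ E]

theorem ConvexOn.apply_add_sum_sub_le {g : E → ℝ} (hg : ConvexOn ℝ Set.univ g) (x : E)
    (S : Finset ι) (v : ι → E) {θ : ℝ} (hθ : 0 < θ) (hS : (#S : ℝ) ≤ θ) :
    g (x + ∑ i ∈ S, v i) - g x ≤ θ⁻¹ * ∑ i ∈ S, (g (x + θ • v i) - g x) := by
  let w : Option ι → ℝ := fun o => o.elim (1 - #S / θ) fun _ => θ⁻¹
  let p : Option ι → E := fun o => o.elim x fun i => x + θ • v i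
  have hw_nonneg : ∀ o ∈ insertNone S, 0 ≤ w o := by
    rintro (_ | i) -
    · simpa [w] using div_le_one_of_le₀ hS hθ.le
    · simpa [w] using hθ.le
  have hw_sum : ∑ o ∈ insertNone S, w o = 1 := by
    simp only [sum_insertNone, w, Option.elim, sum_const, nsmul_eq_mul]
    field_simp
    ring
  have hpoint : ∑ o ∈ insertNone S, w o • p o = x + ∑ i ∈ S, v i := by
    simp only [sum_insertNone, w, p, Option.elim, smul_add, smul_smul, inv_mul_cancel₀ hθ.ne',
      one_smul, sum_add_distrib, sum_const, ← add_assoc, ← Nat.cast_smul_eq_nsmul ℝ, ← add_smul]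
    rw [div_eq_mul_inv, sub_add_cancel, one_smul]
  have hjensen := hg.map_sum_le (p := p) hw_nonneg hw_sum fun _ _ => Set.mem_univ _
  rw [hpoint] at hjensen
  simp only [sum_insertNone, w, p, Option.elim, smul_eq_mul] at hjensen
  rw [sum_sub_distrib, sum_const, nsmul_eq_mul, mul_sub, mul_sum]
  linear_combination hjensen

end Jensen

theorem fderiv_apply_eq_zero_of_forall_add_smul_eq {E F : Type*} [NormedAddCommGroup E]
    [NormedSpace ℝ E] [NormedAddCommGroup F] [NormedSpace ℝ F] {g : E → F} {x v : E}
    (hg : ∀ s : ℝ, g (x + s • v) = g x) :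
    fderiv ℝ g x v = 0 := by
  by_cases hd : DifferentiableAt ℝ g x
  · rw [← hd.lineDeriv_eq_fderiv, lineDeriv]
    simp [hg]
  · simp [fderiv_zero_of_not_differentiableAt hd]

section Blocks

variable {ι : Type*} {E : ι → Type*} [∀ i, AddCommGroup (E i)]

theorem DependsOn.apply_add_eq {β : Type*} {g : (∀ i, E i) → β} {s : Set ι}
    (hg : DependsOn g s) (x : ∀ i, E i) {v : ∀ i, E i} (hv : ∀ i ∈ s, v i = 0) :
    g (x + v) = g x :=
  hg fun i hi => by simp [hv i hi]

theorem ConvexOn.apply_add_sub_le_of_dependsOn [Fintype ι] [DecidableEq ι] [∀ i, Module ℝ (E i)]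
    {g : (∀ i, E i) → ℝ} (hg : ConvexOn ℝ Set.univ g) {s : Finset ι} (hdep : DependsOn g s)
    (x h : ∀ i, E i) {T : Finset ι} (hT : ∀ i ∉ T, h i = 0) {θ : ℝ} (hθ : 0 < θ)
    (hcard : (#(s ∩ T) : ℝ) ≤ θ) :
    g (x + h) - g x ≤ θ⁻¹ * ∑ i, (g (x + θ • Pi.single i (h i)) - g x) := by
  have hrestrict : g (x + h) = g (x + ∑ i ∈ s ∩ T, Pi.single i (h i)) := hdep fun i hi => by
    by_cases hiT : i ∈ T
    · simp [sum_pi_single, mem_coe.mp hi, hiT]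
    · simp [sum_pi_single, hiT, hT i hiT]
  have hpad : ∑ i ∈ s ∩ T, (g (x + θ • Pi.single i (h i)) - g x)
      = ∑ i, (g (x + θ • Pi.single i (h i)) - g x) := by
    refine sum_subset (subset_univ _) fun i _ hi => sub_eq_zero.mpr ?_
    rcases not_and_or.mp (mt mem_inter.mpr hi) with his | hiT
    · exact hdep.apply_add_eq x fun j hj => by
        simp [Pi.single_eq_of_ne (ne_of_mem_of_not_mem hj his)]
    · simp [hT i hiT]
  rw [hrestrict, ← hpad]
  exact hg.apply_add_sum_sub_le x _ _ hθ hcard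

theorem sum_apply_add_sub_le_of_dependsOn [Fintype ι] [DecidableEq ι] [∀ i, Module ℝ (E i)]
    {κ : Type*} [Fintype κ] {g : κ → (∀ i, E i) → ℝ} {J : κ → Finset ι}
    (hconv : ∀ a, ConvexOn ℝ Set.univ (g a)) (hdep : ∀ a, DependsOn (g a) (J a))
    (x h : ∀ i, E i) {T : Finset ι} (hT : ∀ i ∉ T, h i = 0) {θ : ℝ} (hθ : 0 < θ)
    (hcard : ∀ a, (#(J a ∩ T) : ℝ) ≤ θ) :
    ∑ a, g a (x + h) - ∑ a, g a x
      ≤ θ⁻¹ * ∑ i, (∑ a, g a (x + θ • Pi.single i (h i)) - ∑ a, g a x) := calc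
  _ = ∑ a, (g a (x + h) - g a x) := (sum_sub_distrib _ _).symm
  _ ≤ ∑ a, θ⁻¹ * ∑ i, (g a (x + θ • Pi.single i (h i)) - g a x) :=
    sum_le_sum fun a _ => (hconv a).apply_add_sub_le_of_dependsOn (hdep a) x h hT hθ (hcard a)
  _ = _ := by
    rw [← mul_sum, sum_comm]
    simp only [sum_sub_distrib]

end Blocks

theorem inv_mul_apply_add_smul_single_sub_le {ι : Type*} [DecidableEq ι]
    {E : ι → Type*} [∀ i, NormedAddCommGroup (E i)] [∀ i, NormedSpace ℝ (E i)]
    {f : (∀ i, E i) → ℝ} {x : ∀ i, E i} {i : ι} {L : ℝ}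
    (hlip : ∀ t : E i, f (x + Pi.single i t)
      ≤ f x + fderiv ℝ f x (Pi.single i t) + L / 2 * ‖t‖ ^ 2)
    {θ : ℝ} (hθ : 0 < θ) (t : E i) :
    θ⁻¹ * (f (x + θ • Pi.single i t) - f x)
      ≤ fderiv ℝ f x (Pi.single i t) + θ / 2 * (L * ‖t‖ ^ 2) := by
  have hscaled := hlip (θ • t)
  rw [Pi.single_smul, map_smul, smul_eq_mul, norm_smul, Real.norm_of_nonneg hθ.le] at hscaled
  rw [inv_mul_le_iff₀ hθ]
  linear_combination hscaled

theorem dso_general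
    (n : ℕ) (E : Fin n → Type*) [∀ i, NormedAddCommGroup (E i)]
    [∀ i, NormedSpace ℝ (E i)]
    (L : Fin n → ℝ)
    (ι : Type*) [Fintype ι] (J : ι → Finset (Fin n))
    (fJ : ι → (∀ i, E i) → ℝ)
    (hconv : ∀ a, ConvexOn ℝ Set.univ (fJ a))
    (hdep : ∀ a, ∀ x y : ∀ i, E i, (∀ i ∈ J a, x i = y i) → fJ a x = fJ a y)
    (f : (∀ i, E i) → ℝ) (hf : f = fun x => ∑ a, fJ a x)
    (hlip : ∀ (x : ∀ i, E i) (i : Fin n) (t : E i),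
      f (x + Pi.single i t)
        ≤ f x + fderiv ℝ f x (Pi.single i t) + L i / 2 * ‖t‖ ^ 2)
    (x h : ∀ i, E i) :
    f (x + h) ≤ f x + fderiv ℝ f x h
      + ((univ.sup fun a => ((J a) ∩ (univ.filter fun i => h i ≠ 0)).card : ℕ) : ℝ) / 2
          * ∑ i, L i * ‖h i‖ ^ 2 := by
  set T := univ.filter fun i => h i ≠ 0
  set θ := univ.sup fun a => #(J a ∩ T)
  have hT : ∀ i ∉ T, h i = 0 := by simp [T]
  have hcard : ∀ a, #(J a ∩ T) ≤ θ := fun a => le_sup (f := fun a => #(J a ∩ T)) (mem_univ a)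
  have hdepJ : ∀ a, DependsOn (fJ a) (J a) := fun a _ _ => hdep a _ _
  rcases Nat.eq_zero_or_pos θ with hθ | hθ
  · have hzero : ∀ a, ∀ i ∈ J a, h i = 0 := fun a i hi => by
      have hdisj : Disjoint (J a) T :=
        disjoint_iff_inter_eq_empty.mpr (card_eq_zero.mp (Nat.le_zero.mp (hθ ▸ hcard a)))
      simpa [T] using disjoint_left.mp hdisj hi
    have hflat : ∀ s : ℝ, f (x + s • h) = f x := fun s => by
      simp only [hf]
      exact sum_congr rfl fun a _ => (hdepJ a).apply_add_eq x fun i hi => by simp [hzero a i hi]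
    have hfx : f (x + h) = f x := by simpa using hflat 1
    simp [hfx, fderiv_apply_eq_zero_of_forall_add_smul_eq hflat, hθ]
  · have hθ' : (0 : ℝ) < θ := by exact_mod_cast hθ
    calc f (x + h) = f x + (f (x + h) - f x) := by ring
      _ ≤ f x + (θ : ℝ)⁻¹ * ∑ i, (f (x + (θ : ℝ) • Pi.single i (h i)) - f x) := by
        subst hf
        exact (add_le_add_iff_left _).mpr <| sum_apply_add_sub_le_of_dependsOn hconv hdepJ x h hT
          hθ' fun a => by exact_mod_cast hcard a
      _ ≤ f x + ∑ i, (fderiv ℝ f x (Pi.single i (h i)) + θ / 2 * (L i * ‖h i‖ ^ 2)) := by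
        rw [mul_sum]
        gcongr with i
        exact inv_mul_apply_add_smul_single_sub_le (hlip x i) hθ' (h i)
      _ = _ := by
        rw [sum_add_distrib, ← map_sum, univ_sum_single, ← mul_sum, add_assoc]

/-- **Deterministic separable overapproximation (DSO).** Let `f = ∑_{J ∈ 𝒥} f_J` be
partially separable, with each `f_J` convex, differentiable and depending only on the
blocks `x⁽ⁱ⁾`, `i ∈ J`. Under the block Lipschitz condition
`f(x + Uᵢt) ≤ f(x) + ⟨∇ᵢf(x), t⟩ + (Lᵢ/2)‖t‖²`, for all `x, h`:
`f(x+h) ≤ f(x) + ⟨∇f(x), h⟩ + (θ/2)‖h‖_L²`, where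
`θ = max_{J∈𝒥} |J ∩ supp(h)|` and `supp(h) = {i : h⁽ⁱ⁾ ≠ 0}`. -/
theorem dso
    (n : ℕ) (E : Fin n → Type*) [∀ i, NormedAddCommGroup (E i)]
    [∀ i, NormedSpace ℝ (E i)]
    (L : Fin n → ℝ) (hL : ∀ i, 0 < L i)
    (ι : Type*) [Fintype ι] (J : ι → Finset (Fin n))
    (fJ : ι → (∀ i, E i) → ℝ)
    (hconv : ∀ a, ConvexOn ℝ Set.univ (fJ a))
    (hdiff : ∀ a, Differentiable ℝ (fJ a))
    (hdep : ∀ a, ∀ x y : ∀ i, E i, (∀ i ∈ J a, x i = y i) → fJ a x = fJ a y)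
    (f : (∀ i, E i) → ℝ) (hf : f = fun x => ∑ a, fJ a x)
    (hlip : ∀ (x : ∀ i, E i) (i : Fin n) (t : E i),
      f (x + Pi.single i t)
        ≤ f x + fderiv ℝ f x (Pi.single i t) + L i / 2 * ‖t‖ ^ 2)
    (x h : ∀ i, E i) :
    f (x + h) ≤ f x + fderiv ℝ f x h
      + ((univ.sup fun a => ((J a) ∩ (univ.filter fun i => h i ≠ 0)).card : ℕ) : ℝ) / 2
          * ∑ i, L i * ‖h i‖ ^ 2 :=
  dso_general n E L ι J fJ hconv hdep f hf hlip x h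
end

section
/- Let f : R^N → R be partially separable of degree ω (i.e., f = Σ_{J∈𝒥} f_J with each convex differentiable f_J depending on blocks in J only, and |J| ≤ ω for all J ∈ 𝒥), satisfying the block Lipschitz condition with constants L_i. Then ∇f is globally Lipschitz with constant ω with respect to the norm ‖·‖_L: f(x+h) ≤ f(x) + ⟨∇f(x), h⟩ + (ω/2)‖h‖_L² for all x, h. -/
/-!
Each `f_J` depends on at most `ω` blocks, and on those blocks `x + h` agrees with the convex
combination `(1 - |J|/ω) x + ∑_{i ∈ J} ω⁻¹ (x + ω hᵢ)` (`hᵢ` placed in block `i`). Jensen gives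
`f_J (x + h) ≤ f_J x + ω⁻¹ ∑ᵢ (f_J (x + ω hᵢ) - f_J x)`, the blocks outside `J` contributing
nothing. Summing over `J` and bounding each step `f (x + ω hᵢ) - f x` by the block Lipschitz
condition yields the claim. For `ω = 0` every `f_J` is constant.
-/

open Finset

theorem ConvexOn.map_add_sum_le_of_card_le {E κ : Type*} [AddCommGroup E] [Module ℝ E]
    {φ : E → ℝ} (hφ : ConvexOn ℝ Set.univ φ) (s : Finset κ) {W : ℝ} (hW : 0 < W)
    (hsW : (#s : ℝ) ≤ W) (x : E) (v : κ → E) :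
    φ (x + ∑ i ∈ s, v i) ≤ φ x + W⁻¹ * ∑ i ∈ s, (φ (x + W • v i) - φ x) := by
  have hv : 0 ≤ 1 - #s / W := sub_nonneg.2 (div_le_one_of_le₀ hsW hW.le)
  have h₁ : 1 - #s / W + ∑ _ ∈ s, W⁻¹ = 1 := by
    rw [sum_const, nsmul_eq_mul, div_eq_mul_inv]; ring
  have hJ := hφ.map_add_sum_le (p := fun i => x + W • v i) (fun _ _ => inv_nonneg.2 hW.le) h₁
    (fun _ _ => Set.mem_univ _) hv (Set.mem_univ x)
  have hpt : (1 - #s / W) • x + ∑ i ∈ s, W⁻¹ • (x + W • v i) = x + ∑ i ∈ s, v i := by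
    simp only [smul_add, smul_smul, inv_mul_cancel₀ hW.ne', one_smul, sum_add_distrib, sum_const,
      ← add_assoc, ← Nat.cast_smul_eq_nsmul ℝ, ← add_smul, div_eq_mul_inv]
    rw [sub_add_cancel, one_smul]
  have hval : (1 - #s / W) • φ x + ∑ i ∈ s, W⁻¹ • φ (x + W • v i)
      = φ x + W⁻¹ * ∑ i ∈ s, (φ (x + W • v i) - φ x) := by
    simp only [smul_eq_mul, mul_sum, mul_sub, sum_sub_distrib, sum_const, nsmul_eq_mul]
    ring
  rwa [hpt, hval] at hJ

theorem ConvexOn.map_add_le_of_dependsOn {ι : Type*} [Fintype ι] [DecidableEq ι]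
    {E : ι → Type*} [∀ i, AddCommGroup (E i)] [∀ i, Module ℝ (E i)] {φ : (∀ i, E i) → ℝ}
    (hφ : ConvexOn ℝ Set.univ φ) {s : Finset ι} (hdep : DependsOn φ s) {W : ℝ} (hW : 0 < W)
    (hsW : (#s : ℝ) ≤ W) (x h : ∀ i, E i) :
    φ (x + h) ≤ φ x + W⁻¹ * ∑ i, (φ (x + Pi.single i (W • h i)) - φ x) := by
  have hJ := hφ.map_add_sum_le_of_card_le s hW hsW x fun i => Pi.single i (h i)
  have hxh : φ (x + ∑ i ∈ s, Pi.single i (h i)) = φ (x + h) :=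
    hdep fun j hj => by simp [sum_pi_single, mem_coe.1 hj]
  have hout : ∑ i ∈ s, (φ (x + W • Pi.single i (h i)) - φ x)
      = ∑ i, (φ (x + Pi.single i (W • h i)) - φ x) := by
    simp only [← Pi.single_smul]
    refine sum_subset (subset_univ s) fun i _ hi => sub_eq_zero.2 (hdep fun j hj => ?_)
    simp [Pi.single_eq_of_ne (ne_of_mem_of_not_mem hj hi)]
  rwa [hxh, hout] at hJ

theorem sum_sub_le_of_block_lipschitz {ι : Type*} [Fintype ι] [DecidableEq ι] {E : ι → Type*}
    [∀ i, NormedAddCommGroup (E i)] [∀ i, NormedSpace ℝ (E i)] {f : (∀ i, E i) → ℝ}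
    (D : (∀ i, E i) →L[ℝ] ℝ) (L : ι → ℝ) {x : ∀ i, E i}
    (hlip : ∀ i t, f (x + Pi.single i t) ≤ f x + D (Pi.single i t) + L i / 2 * ‖t‖ ^ 2)
    (t : ∀ i, E i) :
    ∑ i, (f (x + Pi.single i (t i)) - f x) ≤ D t + ∑ i, L i / 2 * ‖t i‖ ^ 2 :=
  calc ∑ i, (f (x + Pi.single i (t i)) - f x)
      ≤ ∑ i, (D (Pi.single i (t i)) + L i / 2 * ‖t i‖ ^ 2) :=
        sum_le_sum fun i _ => by linarith [hlip i (t i)]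
    _ = D t + ∑ i, L i / 2 * ‖t i‖ ^ 2 := by rw [sum_add_distrib, ← map_sum, univ_sum_single]

theorem global_lipschitz_partially_separable_general
    (n : ℕ) (E : Fin n → Type*) [∀ i, NormedAddCommGroup (E i)]
    [∀ i, NormedSpace ℝ (E i)]
    (L : Fin n → ℝ)
    (ι : Type*) [Fintype ι] (J : ι → Finset (Fin n)) (ω : ℕ)
    (hω : ∀ a, (J a).card ≤ ω)
    (fJ : ι → (∀ i, E i) → ℝ)
    (hconv : ∀ a, ConvexOn ℝ Set.univ (fJ a))
    (hdep : ∀ a, ∀ x y : ∀ i, E i, (∀ i ∈ J a, x i = y i) → fJ a x = fJ a y)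
    (f : (∀ i, E i) → ℝ) (hf : f = fun x => ∑ a, fJ a x)
    (hlip : ∀ (x : ∀ i, E i) (i : Fin n) (t : E i),
      f (x + Pi.single i t)
        ≤ f x + fderiv ℝ f x (Pi.single i t) + L i / 2 * ‖t‖ ^ 2)
    (x h : ∀ i, E i) :
    f (x + h) ≤ f x + fderiv ℝ f x h + (ω : ℝ) / 2 * ∑ i, L i * ‖h i‖ ^ 2 := by
  obtain rfl | hω_pos := Nat.eq_zero_or_pos ω
  · have hconst : ∀ y, f y = f x := fun y => by
      simp only [hf]
      exact sum_congr rfl fun a _ => hdep a y x (by simp [card_eq_zero.1 (Nat.le_zero.1 (hω a))])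
    rw [show f = fun _ => f x from funext hconst, fderiv_fun_const]
    simp
  set W : ℝ := (ω : ℝ)
  have hW : 0 < W := Nat.cast_pos.2 hω_pos
  have hsep : f (x + h) ≤ f x + W⁻¹ * ∑ i, (f (x + Pi.single i (W • h i)) - f x) := by
    simp only [hf]
    calc ∑ a, fJ a (x + h)
        ≤ ∑ a, (fJ a x + W⁻¹ * ∑ i, (fJ a (x + Pi.single i (W • h i)) - fJ a x)) :=
          sum_le_sum fun a _ => (hconv a).map_add_le_of_dependsOn (fun _ _ => hdep a _ _) hW
            (Nat.cast_le.2 (hω a)) x h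
      _ = _ := by
          rw [sum_add_distrib, ← mul_sum, sum_comm]
          simp only [sum_sub_distrib]
  have hblock := sum_sub_le_of_block_lipschitz (fderiv ℝ f x) L (hlip x) (W • h)
  simp only [Pi.smul_apply, map_smul, norm_smul, Real.norm_of_nonneg hW.le, smul_eq_mul] at hblock
  calc f (x + h) ≤ f x + W⁻¹ * ∑ i, (f (x + Pi.single i (W • h i)) - f x) := hsep
    _ ≤ f x + W⁻¹ * (W * fderiv ℝ f x h + ∑ i, L i / 2 * (W * ‖h i‖) ^ 2) := by gcongr
    _ = f x + fderiv ℝ f x h + W / 2 * ∑ i, L i * ‖h i‖ ^ 2 := by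
        rw [mul_add, ← mul_assoc, inv_mul_cancel₀ hW.ne', one_mul, add_assoc, mul_sum, mul_sum]
        congr 2
        exact sum_congr rfl fun i _ => by field_simp

/-- **Global Lipschitz continuity of `∇f` for partially separable `f`.** Let
`f = ∑_{J ∈ 𝒥} f_J` be partially separable of degree `ω` (each `f_J` convex,
differentiable, depending only on blocks in `J`, with `|J| ≤ ω`), satisfying the block
Lipschitz condition with constants `Lᵢ`. Then for all `x, h`:
`f(x+h) ≤ f(x) + ⟨∇f(x), h⟩ + (ω/2)‖h‖_L²`. -/
theorem global_lipschitz_partially_separable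
    (n : ℕ) (E : Fin n → Type*) [∀ i, NormedAddCommGroup (E i)]
    [∀ i, NormedSpace ℝ (E i)]
    (L : Fin n → ℝ) (hL : ∀ i, 0 < L i)
    (ι : Type*) [Fintype ι] (J : ι → Finset (Fin n)) (ω : ℕ)
    (hω : ∀ a, (J a).card ≤ ω)
    (fJ : ι → (∀ i, E i) → ℝ)
    (hconv : ∀ a, ConvexOn ℝ Set.univ (fJ a))
    (hdiff : ∀ a, Differentiable ℝ (fJ a))
    (hdep : ∀ a, ∀ x y : ∀ i, E i, (∀ i ∈ J a, x i = y i) → fJ a x = fJ a y)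
    (f : (∀ i, E i) → ℝ) (hf : f = fun x => ∑ a, fJ a x)
    (hlip : ∀ (x : ∀ i, E i) (i : Fin n) (t : E i),
      f (x + Pi.single i t)
        ≤ f x + fderiv ℝ f x (Pi.single i t) + L i / 2 * ‖t‖ ^ 2)
    (x h : ∀ i, E i) :
    f (x + h) ≤ f x + fderiv ℝ f x h + (ω : ℝ) / 2 * ∑ i, L i * ‖h i‖ ^ 2 :=
  global_lipschitz_partially_separable_general n E L ι J ω hω fJ hconv hdep f hf hlip x h
end

section
/- Let Ŝ be the τ-nice sampling of {1,...,n} with τ ≥ 1, and let f : R^N → R be a partially separable convex function of degree ω satisfying the block Lipschitz condition with constants L_i. Then for all x, h ∈ R^N: E[f(x + h_{[Ŝ]})] ≤ f(x) + (τ/n)(⟨∇f(x), h⟩ + (β/2)‖h‖_L²), where β = 1 + (ω−1)(τ−1)/max{1, n−1}. -/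
/-!
Fix a summand `f_J`. It sees `x + h_[S]` only through the `k = |S ∩ J|` blocks of `S ∩ J`, and
there `x + h_[S]` is the average of the points `x + k • h⁽ⁱ⁾ eᵢ`, `i ∈ S ∩ J`; so by convexity
`f_J(x + h_[S]) - f_J(x)` is at most the sum over `i ∈ S ∩ J` of the secant slopes
`(f_J(x + k • h⁽ⁱ⁾ eᵢ) - f_J(x)) / k`. Summing over the `τ`-subsets `S`, the number of `S ∋ i` with
`|S ∩ J| = k` depends only on `|J|`. After enlarging every `J` to the common size `min ω n`, the
bounds for the summands therefore add up to a combination of secant slopes of `f` itself, and the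
block Lipschitz condition bounds those by `⟨∇ᵢ f(x), h⁽ⁱ⁾⟩ + k Lᵢ ‖h⁽ⁱ⁾‖² / 2`. What remains are the
hypergeometric averages `P(i ∈ Ŝ) = τ / n` and
`E[|Ŝ ∩ J| 1_{i ∈ Ŝ}] = (τ / n) (1 + (|J| - 1)(τ - 1) / (n - 1))` for `i ∈ J`, both consequences of
Vandermonde's identity.
-/

open Finset

namespace Nat

theorem sum_range_choose_mul_choose (a b t : ℕ) :
    ∑ k ∈ range (t + 1), a.choose k * b.choose (t - k) = (a + b).choose t := by
  rw [add_choose_eq, Finset.Nat.sum_antidiagonal_eq_sum_range_succ_mk]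

theorem add_mul_sum_range_mul_choose_mul_choose (a b t : ℕ) :
    (a + b) * ∑ k ∈ range (t + 1), k * (a.choose k * b.choose (t - k))
      = a * t * (a + b).choose t := by
  rcases a with _ | a
  · simp only [zero_mul]
    refine mul_eq_zero_of_right _ (sum_eq_zero fun k _ => ?_)
    rcases k with _ | k <;> simp
  rcases t with _ | t
  · simp
  have absorb : ∀ k ∈ range (t + 1),
      (k + 1) * ((a + 1).choose (k + 1) * b.choose (t + 1 - (k + 1)))
        = (a + 1) * (a.choose k * b.choose (t - k)) := by
    intro k _
    rw [Nat.add_sub_add_right, ← mul_assoc, mul_comm (k + 1), ← add_one_mul_choose_eq]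
    ring
  rw [sum_range_succ', sum_congr rfl absorb, ← mul_sum, sum_range_choose_mul_choose, zero_mul,
    add_zero, add_right_comm, mul_left_comm, add_one_mul_choose_eq]
  ring

end Nat

theorem inv_choose_mul_sum_choose_mul_choose {n w t : ℕ} (hw : 1 ≤ w) (hwn : w ≤ n)
    (ht : t + 1 ≤ n) :
    (n.choose (t + 1) : ℝ)⁻¹
        * ∑ k ∈ range (t + 1), (((w - 1).choose k * (n - w).choose (t - k) : ℕ) : ℝ)
      = (t + 1) / n := by
  have hvand : ∑ k ∈ range (t + 1), (w - 1).choose k * (n - w).choose (t - k)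
      = (n - 1).choose t := by
    rw [Nat.sum_range_choose_mul_choose, show w - 1 + (n - w) = n - 1 by omega]
  have habsorb : n * (n - 1).choose t = n.choose (t + 1) * (t + 1) := by
    obtain ⟨m, rfl⟩ : ∃ m, n = m + 1 := ⟨n - 1, by omega⟩
    exact Nat.add_one_mul_choose_eq m t
  have hN : (n.choose (t + 1) : ℝ) ≠ 0 := by exact_mod_cast (Nat.choose_pos ht).ne'
  have hn : (n : ℝ) ≠ 0 := by exact_mod_cast (by omega : n ≠ 0)
  rw [← Nat.cast_sum, hvand]
  field_simp
  exact_mod_cast (mul_comm _ _).trans habsorb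

theorem inv_choose_mul_sum_succ_mul_choose_mul_choose {n w t : ℕ} (hw : 1 ≤ w) (hwn : w ≤ n)
    (ht : t + 1 ≤ n) :
    (n.choose (t + 1) : ℝ)⁻¹ * ∑ k ∈ range (t + 1),
        ((k : ℝ) + 1) * (((w - 1).choose k * (n - w).choose (t - k) : ℕ) : ℝ)
      = (t + 1) / n * (1 + ((w : ℝ) - 1) * t / ((max 1 (n - 1) : ℕ) : ℝ)) := by
  set c : ℕ → ℕ := fun k => (w - 1).choose k * (n - w).choose (t - k)
  have hvand : ∑ k ∈ range (t + 1), c k = (n - 1).choose t := by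
    rw [Nat.sum_range_choose_mul_choose, show w - 1 + (n - w) = n - 1 by omega]
  have hmean : ((max 1 (n - 1) : ℕ) : ℝ) * ∑ k ∈ range (t + 1), (k * c k : ℕ)
      = ((w : ℝ) - 1) * t * (n - 1).choose t := by
    rcases Nat.lt_or_ge n 2 with hn | hn
    · obtain rfl : t = 0 := by omega
      simp
    have key : (n - 1) * ∑ k ∈ range (t + 1), k * c k = (w - 1) * t * (n - 1).choose t := by
      rw [← show w - 1 + (n - w) = n - 1 by omega]
      exact Nat.add_mul_sum_range_mul_choose_mul_choose (w - 1) (n - w) t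
    rw [show max 1 (n - 1) = n - 1 by omega, ← Nat.cast_mul, key]
    push_cast [Nat.cast_sub hw]
    ring
  have hC : (0 : ℝ) < (n - 1).choose t := by exact_mod_cast Nat.choose_pos (by omega)
  have hn : (0 : ℝ) < n := by exact_mod_cast (by omega : 0 < n)
  have hsplit : ∑ k ∈ range (t + 1), ((k : ℝ) + 1) * (c k : ℝ)
      = ∑ k ∈ range (t + 1), (k * c k : ℕ) + ∑ k ∈ range (t + 1), (c k : ℝ) := by
    push_cast
    rw [← sum_add_distrib]
    exact sum_congr rfl fun k _ => by ring
  have hinv : (n.choose (t + 1) : ℝ)⁻¹ = (t + 1) / n / (n - 1).choose t := by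
    rw [← inv_choose_mul_sum_choose_mul_choose hw hwn ht, ← Nat.cast_sum, hvand]
    field_simp
  rw [hsplit, ← Nat.cast_sum (f := c), hvand, hinv]
  field_simp
  linear_combination hmean

theorem ConvexOn.map_add_sum_sub_le {V ι : Type*} [AddCommGroup V] [Module ℝ V] {g : V → ℝ}
    (hg : ConvexOn ℝ Set.univ g) (x : V) (v : ι → V) (T : Finset ι) :
    g (x + ∑ i ∈ T, v i) - g x ≤ ∑ i ∈ T, (g (x + (#T : ℝ) • v i) - g x) / #T := by
  rcases T.eq_empty_or_nonempty with rfl | hT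
  · simp
  have hk : (#T : ℝ) ≠ 0 := by positivity
  have hpoint : x + ∑ i ∈ T, v i = ∑ i ∈ T, (#T : ℝ)⁻¹ • (x + (#T : ℝ) • v i) := by
    simp only [smul_add, smul_smul, inv_mul_cancel₀ hk, one_smul, sum_add_distrib, sum_const,
      ← Nat.cast_smul_eq_nsmul ℝ, mul_inv_cancel₀ hk]
  have hjensen := hg.map_sum_le (t := T) (w := fun _ => (#T : ℝ)⁻¹)
    (p := fun i => x + (#T : ℝ) • v i) (fun _ _ => by positivity)
    (by rw [sum_const, nsmul_eq_mul, mul_inv_cancel₀ hk]) (fun _ _ => Set.mem_univ _)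
  rw [hpoint, ← sum_div, sum_sub_distrib, sum_const, nsmul_eq_mul, sub_div,
    mul_div_cancel_left₀ _ hk, div_eq_inv_mul, mul_sum]
  simpa only [smul_eq_mul] using sub_le_sub_right hjensen (g x)

theorem card_filter_mem_card_inter_eq {α : Type*} [Fintype α] [DecidableEq α] {J : Finset α}
    {i : α} (hi : i ∈ J) {t k : ℕ} (hk : k ≤ t) :
    #{S ∈ powersetCard (t + 1) univ | i ∈ S ∧ #(S ∩ J) = k + 1}
      = (#J - 1).choose k * (Fintype.card α - #J).choose (t - k) := by
  rw [← card_erase_of_mem hi, ← card_compl, ← card_powersetCard, ← card_powersetCard,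
    ← card_product]
  refine card_nbij' (fun S => ((S ∩ J).erase i, S \ J)) (fun p => insert i (p.1 ∪ p.2))
    ?_ ?_ ?_ ?_ <;>
    simp only [Set.MapsTo, Set.LeftInvOn, Set.RightInvOn, mem_coe, mem_filter, mem_product,
      mem_powersetCard, subset_univ, true_and, Prod.forall, Prod.mk.injEq]
  · rintro S ⟨hS, hiS, hSJ⟩
    refine ⟨⟨erase_subset_erase _ inter_subset_right, ?_⟩, ?_, ?_⟩
    · rw [card_erase_of_mem (mem_inter.2 ⟨hiS, hi⟩), hSJ, Nat.add_sub_cancel]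
    · grind [mem_compl]
    · have := card_inter_add_card_sdiff S J
      omega
  · rintro A B ⟨⟨hA, hAc⟩, hB, hBc⟩
    have hiAB : i ∉ A ∪ B := by grind [mem_compl]
    have hAB : Disjoint A B := by grind [disjoint_left, mem_compl]
    have hinter : insert i (A ∪ B) ∩ J = insert i A := by grind [mem_compl]
    rw [card_insert_of_notMem hiAB, card_union_of_disjoint hAB, hinter,
      card_insert_of_notMem (by grind)]
    grind
  · rintro S ⟨-, hiS, -⟩
    grind
  · rintro A B ⟨⟨hA, -⟩, hB, -⟩
    constructor <;> ext j <;> grind [mem_compl]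

theorem sum_ite_card_eq_mul {α : Type*} [Fintype α] [DecidableEq α] (k : ℕ) (p : ℝ)
    (F : Finset α → ℝ) :
    ∑ S, (if #S = k then p else 0) * F S = p * ∑ S ∈ powersetCard k univ, F S := by
  rw [powersetCard_eq_filter, powerset_univ, sum_filter, mul_sum]
  exact sum_congr rfl fun S _ => by split_ifs <;> simp

section BlockSlope

variable {ι : Type*} [DecidableEq ι] {E : ι → Type*} [∀ i, AddCommGroup (E i)]
  [∀ i, Module ℝ (E i)]

noncomputable def blockSlope (g : (∀ i, E i) → ℝ) (x h : ∀ i, E i) (i : ι) (m : ℕ) : ℝ :=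
  (g (x + (m : ℝ) • Pi.single i (h i)) - g x) / m

theorem blockSlope_sum {κ : Type*} (s : Finset κ) (g : κ → (∀ i, E i) → ℝ) (x h : ∀ i, E i)
    (i : ι) (m : ℕ) : blockSlope (∑ a ∈ s, g a) x h i m = ∑ a ∈ s, blockSlope (g a) x h i m := by
  simp only [blockSlope, Finset.sum_apply, ← sum_sub_distrib, sum_div]

theorem DependsOn.blockSlope_eq_zero {g : (∀ i, E i) → ℝ} {J : Finset ι} (hdep : DependsOn g J)
    (x h : ∀ i, E i) {i : ι} (hi : i ∉ J) (m : ℕ) : blockSlope g x h i m = 0 := by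
  rw [blockSlope, hdep (y := x) fun j hj => ?_, sub_self, zero_div]
  simp [Pi.single_eq_of_ne (ne_of_mem_of_not_mem (mem_coe.1 hj) hi)]

theorem ConvexOn.map_add_piecewise_sub_le {g : (∀ i, E i) → ℝ} (hg : ConvexOn ℝ Set.univ g)
    {J : Finset ι} (hdep : DependsOn g J) (x h : ∀ i, E i) (S : Finset ι) :
    g (x + S.piecewise h 0) - g x ≤ ∑ i ∈ S ∩ J, blockSlope g x h i #(S ∩ J) := by
  have hsampled : g (x + S.piecewise h 0) = g (x + ∑ i ∈ S ∩ J, Pi.single i (h i)) := by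
    refine hdep fun j hj => ?_
    simp [Finset.piecewise, mem_coe.1 hj]
  rw [hsampled]
  exact hg.map_add_sum_sub_le x _ _

theorem ConvexOn.sum_powersetCard_sub_le [Fintype ι] {g : (∀ i, E i) → ℝ}
    (hg : ConvexOn ℝ Set.univ g) {J : Finset ι} (hdep : DependsOn g J) (x h : ∀ i, E i)
    (t : ℕ) :
    ∑ S ∈ powersetCard (t + 1) univ, (g (x + S.piecewise h 0) - g x)
      ≤ ∑ k ∈ range (t + 1), ((#J - 1).choose k * (Fintype.card ι - #J).choose (t - k) : ℕ)
          * ∑ i, blockSlope g x h i (k + 1) := by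
  set P := powersetCard (t + 1) (univ : Finset ι)
  have hfiber : ∀ i ∈ J, ∑ S ∈ P with i ∈ S, blockSlope g x h i #(S ∩ J)
      = ∑ k ∈ range (t + 1), ((#J - 1).choose k * (Fintype.card ι - #J).choose (t - k) : ℕ)
          * blockSlope g x h i (k + 1) := by
    intro i hi
    have hmaps : ∀ S ∈ {S ∈ P | i ∈ S}, #(S ∩ J) - 1 ∈ range (t + 1) := by
      intro S hS
      simp only [P, mem_filter, mem_powersetCard] at hS
      have := card_le_card (inter_subset_left (s₁ := S) (s₂ := J))
      simp only [mem_range]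
      omega
    rw [← sum_fiberwise_of_maps_to hmaps]
    refine sum_congr rfl fun k hk => ?_
    have hcard : ∀ S ∈ {S ∈ P | i ∈ S}, #(S ∩ J) - 1 = k ↔ #(S ∩ J) = k + 1 := by
      intro S hS
      have : 0 < #(S ∩ J) := card_pos.2 ⟨i, mem_inter.2 ⟨(mem_filter.1 hS).2, hi⟩⟩
      omega
    rw [sum_congr (filter_congr hcard) fun S hS => by rw [(mem_filter.1 hS).2], sum_const,
      filter_filter, card_filter_mem_card_inter_eq hi (Nat.lt_succ_iff.1 (mem_range.1 hk)),
      nsmul_eq_mul]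
  calc ∑ S ∈ P, (g (x + S.piecewise h 0) - g x)
      ≤ ∑ S ∈ P, ∑ i ∈ J with i ∈ S, blockSlope g x h i #(S ∩ J) :=
        sum_le_sum fun S _ => by
          simpa only [filter_mem_eq_inter, inter_comm] using
            hg.map_add_piecewise_sub_le hdep x h S
    _ = ∑ i ∈ J, ∑ S ∈ P with i ∈ S, blockSlope g x h i #(S ∩ J) := by
        simp only [sum_filter]
        exact sum_comm
    _ = ∑ i, ∑ k ∈ range (t + 1),
          ((#J - 1).choose k * (Fintype.card ι - #J).choose (t - k) : ℕ)
            * blockSlope g x h i (k + 1) := by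
        rw [sum_congr rfl hfiber]
        refine sum_subset (subset_univ J) fun i _ hi => ?_
        simp [hdep.blockSlope_eq_zero x h hi]
    _ = _ := by
        simp only [mul_sum]
        exact sum_comm

theorem sum_powersetCard_sub_le_of_card_eq [Fintype ι] {κ : Type*} [Fintype κ]
    {g : κ → (∀ i, E i) → ℝ} (hconv : ∀ a, ConvexOn ℝ Set.univ (g a)) {J : κ → Finset ι}
    {w : ℕ} (hJ : ∀ a, #(J a) = w) (hdep : ∀ a, DependsOn (g a) (J a)) (x h : ∀ i, E i)
    (t : ℕ) :
    ∑ S ∈ powersetCard (t + 1) univ, ((∑ a, g a) (x + S.piecewise h 0) - (∑ a, g a) x)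
      ≤ ∑ k ∈ range (t + 1), ((w - 1).choose k * (Fintype.card ι - w).choose (t - k) : ℕ)
          * ∑ i, blockSlope (∑ a, g a) x h i (k + 1) := by
  simp only [Finset.sum_apply, ← sum_sub_distrib, blockSlope_sum, mul_sum]
  rw [sum_comm]
  refine (sum_le_sum fun a _ => (hconv a).sum_powersetCard_sub_le (hdep a) x h t).trans_eq ?_
  simp only [hJ, mul_sum]
  rw [sum_comm]
  refine sum_congr rfl fun k _ => ?_
  rw [sum_comm]

end BlockSlope

theorem sum_blockSlope_le {ι : Type*} [Fintype ι] [DecidableEq ι] {E : ι → Type*}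
    [∀ i, NormedAddCommGroup (E i)] [∀ i, NormedSpace ℝ (E i)] {f : (∀ i, E i) → ℝ}
    {L : ι → ℝ}
    (hlip : ∀ (x : ∀ i, E i) (i : ι) (t : E i),
      f (x + Pi.single i t) ≤ f x + fderiv ℝ f x (Pi.single i t) + L i / 2 * ‖t‖ ^ 2)
    (x h : ∀ i, E i) {m : ℕ} (hm : 0 < m) :
    ∑ i, blockSlope f x h i m ≤ fderiv ℝ f x h + m * (∑ i, L i * ‖h i‖ ^ 2) / 2 := by
  have hm' : (0 : ℝ) < m := by exact_mod_cast hm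
  have hblock : ∀ i, blockSlope f x h i m
      ≤ fderiv ℝ f x (Pi.single i (h i)) + m * (L i * ‖h i‖ ^ 2) / 2 := by
    intro i
    have := hlip x i ((m : ℝ) • h i)
    rw [Pi.single_smul, map_smul, norm_smul, Real.norm_natCast, smul_eq_mul] at this
    rw [blockSlope, div_le_iff₀ hm']
    linarith
  calc ∑ i, blockSlope f x h i m
      ≤ ∑ i, (fderiv ℝ f x (Pi.single i (h i)) + m * (L i * ‖h i‖ ^ 2) / 2) :=
        sum_le_sum fun i _ => hblock i
    _ = fderiv ℝ f x h + m * (∑ i, L i * ‖h i‖ ^ 2) / 2 := by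
        rw [sum_add_distrib, ← map_sum, univ_sum_single, ← sum_div, ← mul_sum]

section Blocks

variable {n : ℕ} {E : Fin n → Type*} [∀ i, NormedAddCommGroup (E i)] [∀ i, NormedSpace ℝ (E i)]
  {L : Fin n → ℝ} {κ : Type*} [Fintype κ] {J : κ → Finset (Fin n)} {g : κ → (∀ i, E i) → ℝ}

theorem eso_of_eq_empty (hL : ∀ i, 0 ≤ L i) (hJ : ∀ a, J a = ∅)
    (hdep : ∀ a, DependsOn (g a) (J a)) {t : ℕ} (ht : t + 1 ≤ n) (x h : ∀ i, E i) :
    (n.choose (t + 1) : ℝ)⁻¹ * ∑ S ∈ powersetCard (t + 1) univ, (∑ a, g a) (x + S.piecewise h 0)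
      ≤ (∑ a, g a) x + (t + 1) / n * (fderiv ℝ (∑ a, g a) x h
          + (1 - t / ((max 1 (n - 1) : ℕ) : ℝ)) / 2 * ∑ i, L i * ‖h i‖ ^ 2) := by
  obtain ⟨c, hc⟩ : ∃ c, ∑ a, g a = fun _ => c := ⟨(∑ a, g a) x, funext fun y => by
    simp only [Finset.sum_apply]
    refine sum_congr rfl fun a _ => ?_
    have hconst := hdep a
    rw [hJ a, coe_empty] at hconst
    exact hconst.empty y x⟩
  have hN : (n.choose (t + 1) : ℝ) ≠ 0 := by exact_mod_cast (Nat.choose_pos ht).ne'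
  have hm : (0 : ℝ) < ((max 1 (n - 1) : ℕ) : ℝ) := by positivity
  have hβ : 0 ≤ 1 - t / ((max 1 (n - 1) : ℕ) : ℝ) := by
    rw [sub_nonneg, div_le_one hm]
    exact_mod_cast (by omega : t ≤ max 1 (n - 1))
  have hQ : 0 ≤ ∑ i, L i * ‖h i‖ ^ 2 := sum_nonneg fun i _ => mul_nonneg (hL i) (sq_nonneg _)
  simp only [hc, fderiv_fun_const, sum_const, card_powersetCard, card_univ, Fintype.card_fin,
    nsmul_eq_mul, inv_mul_cancel_left₀ hN]
  rw [Pi.zero_apply, zero_apply, zero_add, le_add_iff_nonneg_right]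
  exact mul_nonneg (by positivity) (mul_nonneg (div_nonneg hβ zero_le_two) hQ)

theorem eso_of_card_eq {w : ℕ} (hJ : ∀ a, #(J a) = w) (hw : 1 ≤ w) (hwn : w ≤ n)
    (hconv : ∀ a, ConvexOn ℝ Set.univ (g a)) (hdep : ∀ a, DependsOn (g a) (J a))
    (hlip : ∀ (x : ∀ i, E i) (i : Fin n) (t : E i),
      (∑ a, g a) (x + Pi.single i t)
        ≤ (∑ a, g a) x + fderiv ℝ (∑ a, g a) x (Pi.single i t) + L i / 2 * ‖t‖ ^ 2)
    {t : ℕ} (ht : t + 1 ≤ n) (x h : ∀ i, E i) :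
    (n.choose (t + 1) : ℝ)⁻¹ * ∑ S ∈ powersetCard (t + 1) univ, (∑ a, g a) (x + S.piecewise h 0)
      ≤ (∑ a, g a) x + (t + 1) / n * (fderiv ℝ (∑ a, g a) x h
          + (1 + ((w : ℝ) - 1) * t / ((max 1 (n - 1) : ℕ) : ℝ)) / 2 * ∑ i, L i * ‖h i‖ ^ 2) := by
  set f := ∑ a, g a
  set Q := ∑ i, L i * ‖h i‖ ^ 2
  set c : ℕ → ℝ := fun k => (((w - 1).choose k * (n - w).choose (t - k) : ℕ) : ℝ)
  have hgain : ∑ S ∈ powersetCard (t + 1) univ, (f (x + S.piecewise h 0) - f x)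
      ≤ (∑ k ∈ range (t + 1), c k) * fderiv ℝ f x h
        + (∑ k ∈ range (t + 1), ((k : ℝ) + 1) * c k) * Q / 2 := by
    calc _ ≤ ∑ k ∈ range (t + 1), c k * ∑ i, blockSlope f x h i (k + 1) := by
          simpa only [Fintype.card_fin] using
            sum_powersetCard_sub_le_of_card_eq hconv hJ hdep x h t
      _ ≤ ∑ k ∈ range (t + 1), c k * (fderiv ℝ f x h + (k + 1 : ℕ) * Q / 2) :=
          sum_le_sum fun k _ => mul_le_mul_of_nonneg_left
            (sum_blockSlope_le hlip x h k.succ_pos) (Nat.cast_nonneg _)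
      _ = _ := by
          rw [sum_mul, sum_mul, sum_div, ← sum_add_distrib]
          exact sum_congr rfl fun k _ => by push_cast; ring
  have hN : (n.choose (t + 1) : ℝ) ≠ 0 := by exact_mod_cast (Nat.choose_pos ht).ne'
  have hcard : #(powersetCard (t + 1) (univ : Finset (Fin n))) = n.choose (t + 1) := by
    rw [card_powersetCard, card_univ, Fintype.card_fin]
  rw [sum_sub_distrib, sum_const, hcard, nsmul_eq_mul, sub_le_iff_le_add] at hgain
  calc (n.choose (t + 1) : ℝ)⁻¹ * ∑ S ∈ powersetCard (t + 1) univ, f (x + S.piecewise h 0)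
      ≤ (n.choose (t + 1) : ℝ)⁻¹ * (_ + n.choose (t + 1) * f x) :=
        mul_le_mul_of_nonneg_left hgain (by positivity)
    _ = _ := by
      rw [mul_add, mul_add, ← mul_assoc, inv_choose_mul_sum_choose_mul_choose hw hwn ht,
        inv_mul_cancel_left₀ hN]
      linear_combination (Q / 2) * inv_choose_mul_sum_succ_mul_choose_mul_choose hw hwn ht

end Blocks

theorem eso_tau_nice_general
    (n : ℕ) (E : Fin n → Type*) [∀ i, NormedAddCommGroup (E i)]
    [∀ i, NormedSpace ℝ (E i)]
    (L : Fin n → ℝ) (hL : ∀ i, 0 < L i)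
    (ι : Type*) [Fintype ι] (J : ι → Finset (Fin n)) (ω : ℕ)
    (hω : ∀ a, (J a).card ≤ ω)
    (fJ : ι → (∀ i, E i) → ℝ)
    (hconv : ∀ a, ConvexOn ℝ Set.univ (fJ a))
    (hdep : ∀ a, ∀ x y : ∀ i, E i, (∀ i ∈ J a, x i = y i) → fJ a x = fJ a y)
    (f : (∀ i, E i) → ℝ) (hf : f = fun x => ∑ a, fJ a x)
    (hlip : ∀ (x : ∀ i, E i) (i : Fin n) (t : E i),
      f (x + Pi.single i t)
        ≤ f x + fderiv ℝ f x (Pi.single i t) + L i / 2 * ‖t‖ ^ 2)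
    (τ : ℕ) (hτ1 : 1 ≤ τ) (hτn : τ ≤ n)
    (x h : ∀ i, E i) :
    ∑ S : Finset (Fin n),
        (if S.card = τ then ((n.choose τ : ℝ))⁻¹ else 0)
          * f (x + fun i => if i ∈ S then h i else 0)
      ≤ f x + ((τ : ℝ) / (n : ℝ)) *
          (fderiv ℝ f x h
            + (1 + ((ω : ℝ) - 1) * ((τ : ℝ) - 1) / ((max 1 (n - 1) : ℕ) : ℝ)) / 2
                * ∑ i, L i * ‖h i‖ ^ 2) := by
  obtain ⟨t, rfl⟩ : ∃ t, τ = t + 1 := ⟨τ - 1, by omega⟩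
  rw [← sum_fn] at hf
  subst hf
  have hdep' : ∀ a, DependsOn (fJ a) (J a) := fun a x y => hdep a x y
  rw [sum_ite_card_eq_mul, Nat.cast_add_one, add_sub_cancel_right]
  rcases Nat.eq_zero_or_pos ω with rfl | hω0
  · have := eso_of_eq_empty (fun i => (hL i).le)
      (fun a => card_eq_zero.1 (Nat.le_zero.1 (hω a))) hdep' hτn x h
    rwa [Nat.cast_zero, zero_sub, neg_one_mul, neg_div, ← sub_eq_add_neg]
  choose J' hJJ' hJ' using fun a => exists_superset_card_eq (s := J a) (n := min ω n)
    (le_min (hω a) (card_le_univ _ |>.trans_eq (Fintype.card_fin n))) (by simp)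
  refine (eso_of_card_eq hJ' (by omega) (min_le_right _ _) hconv
    (fun a => (hdep' a).mono (coe_subset.2 (hJJ' a))) hlip hτn x h).trans ?_
  have hQ : 0 ≤ ∑ i, L i * ‖h i‖ ^ 2 := sum_nonneg fun i _ => mul_nonneg (hL i).le (sq_nonneg _)
  gcongr
  exact_mod_cast min_le_left _ _

/-- **ESO for the `τ`-nice sampling.** Let `Ŝ` be the `τ`-nice sampling of `{1,...,n}`
(`τ ≥ 1`) and `f` a partially separable convex function of degree `ω` satisfying the block
Lipschitz condition with constants `Lᵢ`. Then for all `x, h`: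
`E[f(x + h_{[Ŝ]})] ≤ f(x) + (τ/n)(⟨∇f(x), h⟩ + (β/2)‖h‖_L²)`, where
`β = 1 + (ω−1)(τ−1)/max{1, n−1}`. -/
theorem eso_tau_nice
    (n : ℕ) (E : Fin n → Type*) [∀ i, NormedAddCommGroup (E i)]
    [∀ i, NormedSpace ℝ (E i)]
    (L : Fin n → ℝ) (hL : ∀ i, 0 < L i)
    (ι : Type*) [Fintype ι] (J : ι → Finset (Fin n)) (ω : ℕ)
    (hω : ∀ a, (J a).card ≤ ω)
    (fJ : ι → (∀ i, E i) → ℝ)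
    (hconv : ∀ a, ConvexOn ℝ Set.univ (fJ a))
    (hdiff : ∀ a, Differentiable ℝ (fJ a))
    (hdep : ∀ a, ∀ x y : ∀ i, E i, (∀ i ∈ J a, x i = y i) → fJ a x = fJ a y)
    (f : (∀ i, E i) → ℝ) (hf : f = fun x => ∑ a, fJ a x)
    (hlip : ∀ (x : ∀ i, E i) (i : Fin n) (t : E i),
      f (x + Pi.single i t)
        ≤ f x + fderiv ℝ f x (Pi.single i t) + L i / 2 * ‖t‖ ^ 2)
    (τ : ℕ) (hτ1 : 1 ≤ τ) (hτn : τ ≤ n)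
    (x h : ∀ i, E i) :
    ∑ S : Finset (Fin n),
        (if S.card = τ then ((n.choose τ : ℝ))⁻¹ else 0)
          * f (x + fun i => if i ∈ S then h i else 0)
      ≤ f x + ((τ : ℝ) / (n : ℝ)) *
          (fderiv ℝ f x h
            + (1 + ((ω : ℝ) - 1) * ((τ : ℝ) - 1) / ((max 1 (n - 1) : ℕ) : ℝ)) / 2
                * ∑ i, L i * ‖h i‖ ^ 2) :=
  eso_tau_nice_general n E L hL ι J ω hω fJ hconv hdep f hf hlip τ hτ1 hτn x h
end

section
/- Let F = f + Ω with f convex differentiable with μ_f(w)-strong convexity with respect to ‖·‖_w (μ_f(w) ≥ 0) and Ω convex. For β > 0, define H_{β,w}(x,h) = f(x) + ⟨∇f(x), h⟩ + (β/2)‖h‖_w² + Ω(x+h) and h(x) = argmin_h H_{β,w}(x,h). Then for every x in the domain of F: H_{β,w}(x, h(x)) ≤ min_{y ∈ R^N} { F(y) + ((β − μ_f(w))/2)‖y − x‖_w² }. -/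
open Finset

/-- **Bound on the minimized overapproximation.** Let `F = f + Ω` with `f` convex
differentiable and `μ_f(w)`-strongly convex w.r.t. `‖·‖_w` (`μ_f(w) ≥ 0`) and `Ω` convex.
For `β > 0` let `H_{β,w}(x,h) = f(x) + ⟨∇f(x),h⟩ + (β/2)‖h‖_w² + Ω(x+h)` and let `h(x)`
be its minimizer in `h`. Then for every `x`:
`H_{β,w}(x, h(x)) ≤ min_y { F(y) + ((β − μ_f(w))/2) ‖y − x‖_w² }`. -/
theorem H_min_bound
    (n : ℕ) (E : Fin n → Type*) [∀ i, NormedAddCommGroup (E i)]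
    [∀ i, NormedSpace ℝ (E i)]
    (w : Fin n → ℝ) (hw : ∀ i, 0 < w i)
    (β μ : ℝ) (hβ : 0 < β) (hμ : 0 ≤ μ)
    (f : (∀ i, E i) → ℝ) (hfd : Differentiable ℝ f)
    (hstrong : ∀ x y : ∀ i, E i,
      f x + fderiv ℝ f x (y - x) + μ / 2 * ∑ i, w i * ‖(y - x) i‖ ^ 2 ≤ f y)
    (Om : (∀ i, E i) → ℝ) (hOm : ConvexOn ℝ Set.univ Om)
    (x hstar : ∀ i, E i)
    (hmin : ∀ h' : ∀ i, E i,
      f x + fderiv ℝ f x hstar + β / 2 * ∑ i, w i * ‖hstar i‖ ^ 2 + Om (x + hstar)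
        ≤ f x + fderiv ℝ f x h' + β / 2 * ∑ i, w i * ‖h' i‖ ^ 2 + Om (x + h')) :
    ∀ y : ∀ i, E i,
      f x + fderiv ℝ f x hstar + β / 2 * ∑ i, w i * ‖hstar i‖ ^ 2 + Om (x + hstar)
        ≤ (f y + Om y) + (β - μ) / 2 * ∑ i, w i * ‖(y - x) i‖ ^ 2 := by
  intro y
  have h1 := hmin (y - x)
  have h2 := hstrong x y
  have hx : x + (y - x) = y := by abel
  rw [hx] at h1
  linarith
end
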